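/- Let O be an nc-K-modular operad with horizontal multiplication ⊟, odd non-self-gluings defining the bracket {a⊙b} = Σ a∘_{s,t}b, and BV-type operator Δ given by the sum of odd self-gluings. Then on the coinvariants, Δ is a BV operator for ⊟: Δ(a⊟b) decomposes as Δ(a)⊟b ± a⊟Δ(b) ± {a⊙b}, so that the Gerstenhaber bracket induced by Δ via the BV formula equals the bracket induced by {·⊙·}. -/
import Mathlib


/-- The BV-type operator `Δ(x) = ∑_{{s,s'} ⊂ S} •_{ss'}(x)`, the sum of the odd
self-gluings over unordered two-element subsets of `S` (half the ordered sum). -/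
def ncDelta {k V : Type*} [Field k] [AddCommGroup V] [Module k V]
    (sg : ℕ → ℕ → V →ₗ[k] V) (S : Finset ℕ) (x : V) : V :=
  (2 : k)⁻¹ • ∑ s ∈ S, ∑ t ∈ S.erase s, sg s t x

/-- The bracket `{a ⊙ b} = ∑_{s ∈ S, t ∈ T} a ∘_{s,t} b` of odd non-self gluings. -/
def ncOdot {k V : Type*} [Field k] [AddCommGroup V] [Module k V]
    (glue : ℕ → ℕ → V →ₗ[k] V →ₗ[k] V) (S T : Finset ℕ) (a b : V) : V :=
  ∑ s ∈ S, ∑ t ∈ T, glue s t a b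

/-- For an nc-`K`-modular operad (components `H γ S d`, anticommuting odd self-gluings
`sg`, odd non-self gluings `glue` defining the bracket `{·⊙·}`, and a horizontal
graded-commutative multiplication `mul = ⊟` compatible with the gluings), the operator
`Δ` is a BV operator for `⊟`: `Δ(a ⊟ b)` decomposes as
`Δ(a) ⊟ b ± a ⊟ Δ(b) ± {a ⊙ b}`, so that the Gerstenhaber bracket induced by `Δ` via
the BV formula equals the bracket induced by `{·⊙·}`. -/
theorem nc_K_modular_BV
    {k V : Type*} [Field k] [CharZero k] [AddCommGroup V] [Module k V]
    (H : ℕ → Finset ℕ → ℤ → Submodule k V)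
    (sg : ℕ → ℕ → V →ₗ[k] V)
    (glue : ℕ → ℕ → V →ₗ[k] V →ₗ[k] V)
    (mul : V →ₗ[k] V →ₗ[k] V)
    (hsymm : ∀ s t : ℕ, sg s t = sg t s)
    (hsgcl : ∀ (γ : ℕ) (S : Finset ℕ) (d : ℤ) (a : V), a ∈ H γ S d →
      ∀ s ∈ S, ∀ t ∈ S, s ≠ t → sg s t a ∈ H (γ + 1) ((S.erase s).erase t) (d + 1))
    (hsgvan : ∀ (γ : ℕ) (S : Finset ℕ) (d : ℤ) (a : V), a ∈ H γ S d →
      ∀ s t : ℕ, (s ∉ S ∨ t ∉ S ∨ s = t) → sg s t a = 0)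
    (hsganti : ∀ (s s' t t' : ℕ), s ≠ s' → t ≠ t' → s ≠ t → s ≠ t' → s' ≠ t → s' ≠ t' →
      ∀ x : V, sg s s' (sg t t' x) = -sg t t' (sg s s' x))
    (hglcl : ∀ (γ γ' : ℕ) (S T : Finset ℕ) (d e : ℤ) (a b : V),
      a ∈ H γ S d → b ∈ H γ' T e → ∀ s ∈ S, ∀ t ∈ T,
        glue s t a b ∈ H (γ + γ') ((S.erase s) ∪ (T.erase t)) (d + e + 1))
    (hmulcl : ∀ (γ γ' : ℕ) (S T : Finset ℕ) (d e : ℤ) (a b : V),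
      a ∈ H γ S d → b ∈ H γ' T e → mul a b ∈ H (γ + γ') (S ∪ T) (d + e))
    (hcomm : ∀ (γ γ' : ℕ) (S T : Finset ℕ) (d e : ℤ) (a b : V),
      a ∈ H γ S d → b ∈ H γ' T e → mul a b = ((-1 : k) ^ (d * e)) • mul b a)
    (hcompat₁ : ∀ (γ γ' : ℕ) (S T : Finset ℕ) (d e : ℤ) (a b : V),
      a ∈ H γ S d → b ∈ H γ' T e → Disjoint S T →
      ∀ s ∈ S, ∀ s' ∈ S, s ≠ s' → sg s s' (mul a b) = mul (sg s s' a) b)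
    (hcompat₂ : ∀ (γ γ' : ℕ) (S T : Finset ℕ) (d e : ℤ) (a b : V),
      a ∈ H γ S d → b ∈ H γ' T e → Disjoint S T →
      ∀ t ∈ T, ∀ t' ∈ T, t ≠ t' →
        sg t t' (mul a b) = ((-1 : k) ^ d) • mul a (sg t t' b))
    (hcompat₃ : ∀ (γ γ' : ℕ) (S T : Finset ℕ) (d e : ℤ) (a b : V),
      a ∈ H γ S d → b ∈ H γ' T e → Disjoint S T →
      ∀ s ∈ S, ∀ t ∈ T, sg s t (mul a b) = glue s t a b) :
    ∀ (γ γ' : ℕ) (S T : Finset ℕ) (d e : ℤ) (a b : V),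
      a ∈ H γ S d → b ∈ H γ' T e → Disjoint S T →
      (ncDelta sg (S ∪ T) (mul a b)
        = mul (ncDelta sg S a) b
          + ((-1 : k) ^ d) • mul a (ncDelta sg T b)
          + ncOdot glue S T a b) ∧
      (((-1 : k) ^ d) • ncDelta sg (S ∪ T) (mul a b)
          - mul a (ncDelta sg T b)
          - ((-1 : k) ^ d) • mul (ncDelta sg S a) b
        = ((-1 : k) ^ d) • ncOdot glue S T a b) := by

  intro γ γ' S T d e a b ha hb hST
  have hsd : ∀ s ∈ S, s ∉ T := fun s hs => Finset.disjoint_left.mp hST hs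
  have htd : ∀ t ∈ T, t ∉ S := fun t ht => Finset.disjoint_right.mp hST ht
  have key : ncDelta sg (S ∪ T) (mul a b)
      = mul (ncDelta sg S a) b + ((-1 : k) ^ d) • mul a (ncDelta sg T b)
        + ncOdot glue S T a b := by
    have hsum : ∑ s ∈ S ∪ T, ∑ t ∈ (S ∪ T).erase s, sg s t (mul a b)
        = (∑ s ∈ S, ∑ t ∈ S.erase s, mul (sg s t a) b)
          + (∑ s ∈ T, ∑ t ∈ T.erase s, ((-1:k)^d) • mul a (sg s t b))
          + (ncOdot glue S T a b + ncOdot glue S T a b) := by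
      rw [Finset.sum_union hST]
      have h1 : ∑ s ∈ S, ∑ t ∈ (S ∪ T).erase s, sg s t (mul a b)
          = (∑ s ∈ S, ∑ t ∈ S.erase s, mul (sg s t a) b) + ncOdot glue S T a b := by
        rw [ncOdot, ← Finset.sum_add_distrib]
        refine Finset.sum_congr rfl fun s hs => ?_
        have he : (S ∪ T).erase s = S.erase s ∪ T := by
          rw [Finset.erase_union_distrib, Finset.erase_eq_of_notMem (hsd s hs)]
        rw [he, Finset.sum_union (Finset.disjoint_of_subset_left (Finset.erase_subset _ _) hST)]
        congr 1
        · exact Finset.sum_congr rfl fun t ht =>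
            hcompat₁ γ γ' S T d e a b ha hb hST s hs t (Finset.mem_of_mem_erase ht)
              (Ne.symm (Finset.ne_of_mem_erase ht))
        · exact Finset.sum_congr rfl fun t ht =>
            hcompat₃ γ γ' S T d e a b ha hb hST s hs t ht
      have h2 : ∑ s ∈ T, ∑ t ∈ (S ∪ T).erase s, sg s t (mul a b)
          = (∑ s ∈ T, ∑ t ∈ T.erase s, ((-1:k)^d) • mul a (sg s t b))
            + ncOdot glue S T a b := by
        have hstep : ∑ s ∈ T, ∑ t ∈ (S ∪ T).erase s, sg s t (mul a b)
            = ∑ s ∈ T, ((∑ t ∈ S, glue t s a b)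
                + ∑ t ∈ T.erase s, ((-1:k)^d) • mul a (sg s t b)) := by
          refine Finset.sum_congr rfl fun s hs => ?_
          have he : (S ∪ T).erase s = S ∪ T.erase s := by
            rw [Finset.erase_union_distrib, Finset.erase_eq_of_notMem (htd s hs)]
          rw [he, Finset.sum_union
            (Finset.disjoint_of_subset_right (Finset.erase_subset _ _) hST)]
          congr 1
          · refine Finset.sum_congr rfl fun t ht => ?_
            rw [hsymm]
            exact hcompat₃ γ γ' S T d e a b ha hb hST t ht s hs
          · exact Finset.sum_congr rfl fun t ht =>
              hcompat₂ γ γ' S T d e a b ha hb hST s hs t (Finset.mem_of_mem_erase ht)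
                (Ne.symm (Finset.ne_of_mem_erase ht))
        rw [hstep, Finset.sum_add_distrib, Finset.sum_comm]
        rw [ncOdot, add_comm]
      rw [h1, h2]
      abel
    have hmulA : mul (ncDelta sg S a) b
        = (2:k)⁻¹ • ∑ s ∈ S, ∑ t ∈ S.erase s, mul (sg s t a) b := by
      simp [ncDelta, map_smul, map_sum, LinearMap.smul_apply, LinearMap.sum_apply]
    have hmulB : mul a (ncDelta sg T b)
        = (2:k)⁻¹ • ∑ s ∈ T, ∑ t ∈ T.erase s, mul a (sg s t b) := by
      simp [ncDelta, map_smul, map_sum]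
    have hB : ∑ s ∈ T, ∑ t ∈ T.erase s, ((-1:k)^d) • mul a (sg s t b)
        = ((-1:k)^d) • ∑ s ∈ T, ∑ t ∈ T.erase s, mul a (sg s t b) := by
      simp [Finset.smul_sum]
    rw [ncDelta, hsum, hB, hmulA, hmulB]
    have h2 : ((2:k)⁻¹) • (ncOdot glue S T a b + ncOdot glue S T a b)
        = ncOdot glue S T a b := by
      rw [← two_smul k, smul_smul]
      norm_num
    rw [smul_add, smul_add, h2, smul_comm ((2:k)⁻¹) ((-1:k)^d)]
  refine ⟨key, ?_⟩
  have hc : ((-1:k)^d) * ((-1:k)^d) = 1 := by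
    rw [← zpow_add₀ (by norm_num : (-1:k) ≠ 0), ← two_mul, zpow_mul]
    norm_num
  rw [key]
  simp only [smul_add, smul_smul, hc, one_smul]
  abel
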